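/- Let F : ℝ^N → ℝ be convex, lower semicontinuous, and satisfy C₁‖ξ‖^{p'} ≤ F(ξ) ≤ C₂‖ξ‖^{p'} for all ξ, where 1 < p' < ∞ and 0 < C₁ ≤ C₂. Then its Legendre–Fenchel conjugate F* satisfies C₁'‖ξ*‖^p ≤ F*(ξ*) ≤ C₂'‖ξ*‖^p for all ξ* ∈ ℝ^N, for some constants C₁', C₂' > 0 depending only on C₁, C₂, p, where 1/p + 1/p' = 1. -/

import Mathlib

/-!
Conjugation reverses pointwise inequalities, so it suffices to conjugate the two bounds
`C ‖ξ‖ ^ p'`. By Young's inequality `s t ≤ c s ^ p + C t ^ p'` with `c = (C p') ^ (1 - p) / p`,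
with equality at `t = (s / (C p')) ^ (p - 1)`; taking `ξ` parallel to `ξ*` with `‖ξ‖ = t` shows
that the conjugate of `C ‖ξ‖ ^ p'` is exactly `c ‖ξ*‖ ^ p`.
-/

open Set RealInnerProductSpace

/-- The conjugate of `t ↦ C * t ^ p'` on `[0, ∞)` is `s ↦ rpowConjugateCoeff p p' C * s ^ p`. -/
noncomputable def rpowConjugateCoeff (p p' C : ℝ) : ℝ := (C * p') ^ (1 - p) / p

section Scalar

variable {p p' C : ℝ}

theorem rpowConjugateCoeff_pos (hpq : p.HolderConjugate p') (hC : 0 < C) :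
    0 < rpowConjugateCoeff p p' C :=
  div_pos (Real.rpow_pos_of_pos (mul_pos hC hpq.symm.pos) _) hpq.pos

theorem mul_le_rpowConjugateCoeff_mul_rpow_add (hpq : p.HolderConjugate p') (hC : 0 < C)
    {s t : ℝ} (hs : 0 ≤ s) (ht : 0 ≤ t) :
    s * t ≤ rpowConjugateCoeff p p' C * s ^ p + C * t ^ p' := by
  set A := C * p'
  have hA : 0 < A := mul_pos hC hpq.symm.pos
  set L := A ^ p'⁻¹
  have hL : 0 < L := Real.rpow_pos_of_pos hA _
  have hLp : L ^ p = A ^ (p - 1) := by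
    rw [← Real.rpow_mul hA.le, ← div_eq_inv_mul, hpq.div_conj_eq_sub_one]
  have hLp' : L ^ p' = A := by
    rw [← Real.rpow_mul hA.le, inv_mul_cancel₀ hpq.symm.ne_zero, Real.rpow_one]
  have hA_pow : A ^ (1 - p) = (A ^ (p - 1))⁻¹ := by
    rw [← neg_sub, Real.rpow_neg hA.le]
  calc s * t = (s / L) * (L * t) := by field_simp
    _ ≤ (s / L) ^ p / p + (L * t) ^ p' / p' :=
      Real.young_inequality_of_nonneg (div_nonneg hs hL.le) (mul_nonneg hL.le ht) hpq
    _ = rpowConjugateCoeff p p' C * s ^ p + C * t ^ p' := by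
      rw [Real.div_rpow hs hL.le, Real.mul_rpow hL.le ht, hLp, hLp', rpowConjugateCoeff, hA_pow]
      field_simp [hpq.symm.ne_zero]
      simp only [A]
      ring

theorem mul_sub_mul_rpow_eq_rpowConjugateCoeff_mul_rpow (hpq : p.HolderConjugate p')
    (hC : 0 < C) {s t : ℝ} (hs : 0 ≤ s) (ht : t = (s / (C * p')) ^ (p - 1)) :
    s * t - C * t ^ p' = rpowConjugateCoeff p p' C * s ^ p := by
  set A := C * p'
  have hA : 0 < A := mul_pos hC hpq.symm.pos
  set u := s / A
  have hu : 0 ≤ u := div_nonneg hs hA.le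
  have hs_eq : s = A * u := (mul_div_cancel₀ s hA.ne').symm
  have hst : s * t = A * u ^ p := by
    rw [ht, hs_eq, mul_assoc, ← Real.rpow_one_add' hu (by simpa using hpq.ne_zero)]
    ring_nf
  have ht_pow : t ^ p' = u ^ p := by
    rw [ht, ← Real.rpow_mul hu, hpq.sub_one_mul_conj]
  have hA_coeff : A ^ (1 - p) * A ^ p = A := by
    rw [← Real.rpow_add hA, sub_add_cancel, Real.rpow_one]
  have hA_sub : A - C = A / p := by
    rw [mul_div_assoc, hpq.symm.div_conj_eq_sub_one]
    ring
  calc s * t - C * t ^ p' = (A - C) * u ^ p := by rw [hst, ht_pow]; ring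
    _ = A ^ (1 - p) / p * (A ^ p * u ^ p) := by rw [hA_sub]; nth_rw 1 [← hA_coeff]; ring
    _ = rpowConjugateCoeff p p' C * s ^ p := by
      rw [rpowConjugateCoeff, hs_eq, Real.mul_rpow hA.le hu]

end Scalar

section InnerProductSpace

variable {E : Type*} [NormedAddCommGroup E] [InnerProductSpace ℝ E] {p p' C : ℝ}

theorem exists_inner_sub_mul_norm_rpow_eq (hpq : p.HolderConjugate p') (hC : 0 < C) (x : E) :
    ∃ y : E, ⟪x, y⟫ - C * ‖y‖ ^ p' = rpowConjugateCoeff p p' C * ‖x‖ ^ p := by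
  rcases eq_or_ne x 0 with rfl | hx
  · exact ⟨0, by simp [Real.zero_rpow hpq.ne_zero, Real.zero_rpow hpq.symm.ne_zero]⟩
  set t := (‖x‖ / (C * p')) ^ (p - 1)
  have ht : 0 ≤ t := Real.rpow_nonneg (div_nonneg (norm_nonneg x) (by nlinarith [hpq.symm.pos])) _
  have hx' : ‖x‖ ≠ 0 := norm_ne_zero_iff.2 hx
  refine ⟨(t / ‖x‖) • x, ?_⟩
  have hnorm : ‖(t / ‖x‖) • x‖ = t := by
    rw [norm_smul, Real.norm_eq_abs, abs_of_nonneg (div_nonneg ht (norm_nonneg x)),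
      div_mul_cancel₀ _ hx']
  have hinner : ⟪x, (t / ‖x‖) • x⟫ = ‖x‖ * t := by
    rw [real_inner_smul_right, real_inner_self_eq_norm_sq]
    field_simp
  rw [hnorm, hinner]
  exact mul_sub_mul_rpow_eq_rpowConjugateCoeff_mul_rpow hpq hC (norm_nonneg x) rfl

theorem rpowConjugateCoeff_mul_norm_rpow_le_of_isLUB (hpq : p.HolderConjugate p') (hC : 0 < C)
    {F : E → ℝ} (hF : ∀ y, F y ≤ C * ‖y‖ ^ p') {x : E} {a : ℝ}
    (ha : IsLUB (range fun y => ⟪x, y⟫ - F y) a) :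
    rpowConjugateCoeff p p' C * ‖x‖ ^ p ≤ a := by
  obtain ⟨y, hy⟩ := exists_inner_sub_mul_norm_rpow_eq hpq hC x
  calc rpowConjugateCoeff p p' C * ‖x‖ ^ p = ⟪x, y⟫ - C * ‖y‖ ^ p' := hy.symm
    _ ≤ ⟪x, y⟫ - F y := sub_le_sub_left (hF y) _
    _ ≤ a := ha.1 (mem_range_self y)

theorem le_rpowConjugateCoeff_mul_norm_rpow_of_isLUB (hpq : p.HolderConjugate p') (hC : 0 < C)
    {F : E → ℝ} (hF : ∀ y, C * ‖y‖ ^ p' ≤ F y) {x : E} {a : ℝ}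
    (ha : IsLUB (range fun y => ⟪x, y⟫ - F y) a) :
    a ≤ rpowConjugateCoeff p p' C * ‖x‖ ^ p := by
  refine ha.2 ?_
  rintro _ ⟨y, rfl⟩
  calc ⟪x, y⟫ - F y ≤ ‖x‖ * ‖y‖ - C * ‖y‖ ^ p' := sub_le_sub (real_inner_le_norm x y) (hF y)
    _ ≤ rpowConjugateCoeff p p' C * ‖x‖ ^ p := by
      linarith [mul_le_rpowConjugateCoeff_mul_rpow_add hpq hC (norm_nonneg x) (norm_nonneg y)]

end InnerProductSpace

theorem conjugate_growth_general (N : ℕ) (p p' C₁ C₂ : ℝ)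
    (hp : 1 < p) (hpp' : 1 / p + 1 / p' = 1)
    (hC₁ : 0 < C₁) (hC₁₂ : C₁ ≤ C₂)
    (F Fstar : EuclideanSpace ℝ (Fin N) → ℝ)
    (hFlow : ∀ ξ, C₁ * ‖ξ‖ ^ p' ≤ F ξ)
    (hFup : ∀ ξ, F ξ ≤ C₂ * ‖ξ‖ ^ p')
    (hconj : ∀ ξs, IsLUB (Set.range fun ξ => ⟪ξs, ξ⟫ - F ξ) (Fstar ξs)) :
    ∃ C₁' C₂' : ℝ, 0 < C₁' ∧ 0 < C₂' ∧
      ∀ ξs, C₁' * ‖ξs‖ ^ p ≤ Fstar ξs ∧ Fstar ξs ≤ C₂' * ‖ξs‖ ^ p := by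
  have hpq : p.HolderConjugate p' :=
    Real.holderConjugate_iff.2 ⟨hp, by simpa only [one_div] using hpp'⟩
  have hC₂ : 0 < C₂ := hC₁.trans_le hC₁₂
  exact ⟨_, _, rpowConjugateCoeff_pos hpq hC₂, rpowConjugateCoeff_pos hpq hC₁, fun ξs =>
    ⟨rpowConjugateCoeff_mul_norm_rpow_le_of_isLUB hpq hC₂ hFup (hconj ξs),
      le_rpowConjugateCoeff_mul_norm_rpow_of_isLUB hpq hC₁ hFlow (hconj ξs)⟩⟩

/-- p'-growth bounds on a convex lsc `F` transfer to p-growth bounds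
on its Legendre–Fenchel conjugate `Fstar`. -/
theorem conjugate_growth (N : ℕ) (p p' C₁ C₂ : ℝ)
    (hp : 1 < p) (hp' : 1 < p') (hpp' : 1 / p + 1 / p' = 1)
    (hC₁ : 0 < C₁) (hC₁₂ : C₁ ≤ C₂)
    (F Fstar : EuclideanSpace ℝ (Fin N) → ℝ)
    (hFconv : ConvexOn ℝ Set.univ F)
    (hFlsc : LowerSemicontinuous F)
    (hFlow : ∀ ξ, C₁ * ‖ξ‖ ^ p' ≤ F ξ)
    (hFup : ∀ ξ, F ξ ≤ C₂ * ‖ξ‖ ^ p')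
    (hconj : ∀ ξs, IsLUB (Set.range fun ξ => ⟪ξs, ξ⟫ - F ξ) (Fstar ξs)) :
    ∃ C₁' C₂' : ℝ, 0 < C₁' ∧ 0 < C₂' ∧
      ∀ ξs, C₁' * ‖ξs‖ ^ p ≤ Fstar ξs ∧ Fstar ξs ≤ C₂' * ‖ξs‖ ^ p :=
  conjugate_growth_general N p p' C₁ C₂ hp hpp' hC₁ hC₁₂ F Fstar hFlow hFup hconj
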